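/- For an integer s ≥ 2 and a rational ρ with 0 < ρ < 1/(s−1), there exists a strictly balanced s-uniform hypergraph with density ρ if and only if ρ = k/(1 + k(s−1)) for some positive integer k. -/

import Mathlib

open scoped Classical

/-- A finite `s`-uniform hypergraph on a vertex set of natural numbers. -/
structure SUnifHypergraph (s : ℕ) where
  V : Finset ℕ
  E : Finset (Finset ℕ)
  card_edges : ∀ e ∈ E, e.card = s
  edges_sub : ∀ e ∈ E, e ⊆ V

namespace SUnifHypergraph

/-- The density `|E|/|V|` of a hypergraph. -/
noncomputable def density {s : ℕ} (G : SUnifHypergraph s) : ℚ :=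
  (G.E.card : ℚ) / (G.V.card : ℚ)

/-- `G` is strictly balanced: every proper subhypergraph with at least one
vertex has strictly smaller density. -/
def StrictlyBalanced {s : ℕ} (G : SUnifHypergraph s) : Prop :=
  G.V.Nonempty ∧ ∀ H : SUnifHypergraph s, H.V ⊆ G.V → H.E ⊆ G.E → H.V.Nonempty →
    ¬(H.V = G.V ∧ H.E = G.E) → H.density < G.density

/-- The subhypergraph of `G` induced on the vertex set `S`. -/
def restrict {s : ℕ} (G : SUnifHypergraph s) (S : Finset ℕ) : SUnifHypergraph s where
  V := G.V ∩ S
  E := G.E.filter (fun e => e ⊆ S)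
  card_edges := fun e he => G.card_edges e (Finset.mem_filter.mp he).1
  edges_sub := fun e he a ha => Finset.mem_inter.mpr
    ⟨G.edges_sub e (Finset.mem_filter.mp he).1 ha, (Finset.mem_filter.mp he).2 ha⟩

/-- A cycle `(v 0, e 0, v 1, e 1, …, v (m-1), e (m-1), v m = v 0)` in `G`. -/
def IsCycle {s : ℕ} (G : SUnifHypergraph s) (m : ℕ) (v : ℕ → ℕ) (e : ℕ → Finset ℕ) : Prop :=
  0 < m ∧ v m = v 0 ∧ e m = e 0 ∧
  (∀ i < m, e i ∈ G.E) ∧ (∀ i < m, v i ∈ G.V) ∧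
  (∀ i < m, v i ≠ v (i + 1)) ∧ (∀ i < m, e i ≠ e (i + 1)) ∧
  (∀ i < m, v i ∈ e i ∧ v (i + 1) ∈ e i)

/-- `G` is connected: it is nonempty and any two vertices are joined by a
chain of edges. -/
def Connected {s : ℕ} (G : SUnifHypergraph s) : Prop :=
  G.V.Nonempty ∧ ∀ u ∈ G.V, ∀ w ∈ G.V,
    Relation.ReflTransGen (fun a b => ∃ e ∈ G.E, a ∈ e ∧ b ∈ e) u w

/-- A tree is a connected hypergraph without cycles. -/
def IsTree {s : ℕ} (G : SUnifHypergraph s) : Prop :=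
  G.Connected ∧ ¬ ∃ m v e, G.IsCycle m v e

/-- For a rooted pair: number of nonroot vertices minus `α` times the number of
edges with at least one nonroot vertex, for roots `S` in the hypergraph `K`. -/
noncomputable def exVal {s : ℕ} (α : ℝ) (S : Finset ℕ) (K : SUnifHypergraph s) : ℝ :=
  ((K.V \ S).card : ℝ) - ((K.E.filter (fun f => ¬ f ⊆ S)).card : ℝ) * α

/-- The rooted hypergraph `(S, K)` is dense: `v - e·α < 0`. -/
noncomputable def IsDense {s : ℕ} (α : ℝ) (S : Finset ℕ) (K : SUnifHypergraph s) : Prop :=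
  exVal α S K < 0

/-- The rooted hypergraph `(S, K)` is sparse: `v - e·α > 0`. -/
noncomputable def IsSparse {s : ℕ} (α : ℝ) (S : Finset ℕ) (K : SUnifHypergraph s) : Prop :=
  0 < exVal α S K

/-- `(R, K)` is rigid: every nailextension `(S, K)` with `R ⊆ S ⊊ V(K)` is dense. -/
noncomputable def Rigid {s : ℕ} (α : ℝ) (R : Finset ℕ) (K : SUnifHypergraph s) : Prop :=
  ∀ S : Finset ℕ, R ⊆ S → S ⊂ K.V → IsDense α S K

/-- `(R, K)` is safe: every subextension `(R, K|_S)` with `R ⊊ S ⊆ V(K)` is sparse. -/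
noncomputable def Safe {s : ℕ} (α : ℝ) (R : Finset ℕ) (K : SUnifHypergraph s) : Prop :=
  ∀ S : Finset ℕ, R ⊂ S → S ⊆ K.V → IsSparse α R (K.restrict S)

/-- `(R, K)` is minimally safe: safe, with no safe nailextension. -/
noncomputable def MinimallySafe {s : ℕ} (α : ℝ) (R : Finset ℕ) (K : SUnifHypergraph s) : Prop :=
  Safe α R K ∧ ¬ ∃ S : Finset ℕ, R ⊂ S ∧ S ⊂ K.V ∧ Safe α S K

/-- A rigid `t`-chain `x 0 ⊆ x 1 ⊆ … ⊆ x k` in `G`: each step adds at most `t`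
vertices and each `(x i, G|_{x (i+1)})` is rigid. -/
noncomputable def IsRigidChain {s : ℕ} (α : ℝ) (G : SUnifHypergraph s) (t k : ℕ)
    (x : ℕ → Finset ℕ) : Prop :=
  (∀ i < k, x i ⊆ x (i + 1)) ∧ (∀ i < k, (x (i + 1) \ x i).card ≤ t) ∧
  (∀ i ≤ k, x i ⊆ G.V) ∧ (∀ i < k, Rigid α (x i) (G.restrict (x (i + 1))))

/-- `C` is the `t`-closure of `X` in `G`: it is the endpoint of a rigid
`t`-chain starting at `X` and contains the endpoint of every such chain. -/
noncomputable def IsTClosure {s : ℕ} (α : ℝ) (G : SUnifHypergraph s) (t : ℕ)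
    (X C : Finset ℕ) : Prop :=
  (∃ k x, IsRigidChain α G t k x ∧ x 0 = X ∧ x k = C) ∧
  ∀ k' x', IsRigidChain α G t k' x' → x' 0 = X → x' k' ⊆ C

end SUnifHypergraph

open SUnifHypergraph

/-- The possible edges of an `s`-uniform hypergraph on `Fin n`. -/
def edgeCandidates (s n : ℕ) : Finset (Finset (Fin n)) :=
  Finset.univ.filter (fun e => e.card = s)

/-- The probability of the event `A` under the binomial random `s`-uniform
hypergraph `G^s(n,p)`: each of the `C(n,s)` possible edges appears
independently with probability `p`. -/
noncomputable def hyperProb (s n : ℕ) (p : ℝ) (A : Set (Finset (Finset (Fin n)))) : ℝ :=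
  ∑ E ∈ (edgeCandidates s n).powerset,
    if E ∈ A then p ^ E.card * (1 - p) ^ ((edgeCandidates s n).card - E.card) else 0

/-- The `s`-uniform hypergraph on vertex set `{0,…,n-1}` determined by an
edge set over `Fin n`. -/
noncomputable def ofEdges (s n : ℕ) (E : Finset (Finset (Fin n))) : SUnifHypergraph s where
  V := Finset.range n
  E := (E.filter (fun e => e.card = s)).image (fun e => e.image Fin.val)
  card_edges := by
    intro f hf
    simp only [Finset.mem_image, Finset.mem_filter] at hf
    obtain ⟨e, ⟨_, hcard⟩, rfl⟩ := hf
    rw [Finset.card_image_of_injective _ Fin.val_injective]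
    exact hcard
  edges_sub := by
    intro f hf a ha
    simp only [Finset.mem_image, Finset.mem_filter] at hf
    obtain ⟨e, _, rfl⟩ := hf
    simp only [Finset.mem_image] at ha
    obtain ⟨b, _, rfl⟩ := ha
    exact Finset.mem_range.mpr b.isLt

/-! A strictly balanced `G` with `k ≥ 1` edges on `n` vertices has every vertex in an edge, and its
edges cannot be split into two vertex-disjoint families: both parts would have density below
`k / n`, and so would their mediant, which is `G` itself. A connected family of `k` sets of size
`s` covers at most `1 + k (s - 1)` points, while `k / n < 1 / (s - 1)` means `n > k (s - 1)`;
hence `n = 1 + k (s - 1)`. Conversely, in the star (`k` edges through one common vertex, otherwise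
disjoint) any `j ≥ 1` edges span exactly `1 + j (s - 1)` vertices, and `j / (1 + j (s - 1))` is
strictly increasing in `j`, so the star is strictly balanced. -/

open Finset

namespace Finset

variable {α : Type*} [DecidableEq α]

theorem biUnion_sdiff_eq_union {E F : Finset (Finset α)} {e : Finset α} (he : e ∈ E)
    (heF : e ∉ F) : (E \ F).biUnion id = e ∪ (E.erase e \ F).biUnion id := by
  conv_lhs => rw [← insert_erase (mem_sdiff.mpr ⟨he, heF⟩)]
  rw [biUnion_insert, erase_sdiff_comm, id]

theorem biUnion_eq_union_biUnion_erase {E : Finset (Finset α)} {e : Finset α} (he : e ∈ E) :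
    E.biUnion id = e ∪ (E.erase e).biUnion id := by
  simpa using biUnion_sdiff_eq_union he (notMem_empty e)

/-- The hypothesis says that every edge of `E` is joined to `W` by a chain of edges of `E`; adding
the edges one at a time, each meeting what is already covered, brings at most `s - 1` new points
per edge. -/
theorem card_union_biUnion_le_of_forall_inter_nonempty {s : ℕ} {E : Finset (Finset α)}
    (hE : ∀ e ∈ E, e.card ≤ s) (W : Finset α)
    (h : ∀ F ⊆ E, F.Nonempty → (F.biUnion id ∩ (W ∪ (E \ F).biUnion id)).Nonempty) :
    (W ∪ E.biUnion id).card ≤ W.card + E.card * (s - 1) := by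
  induction E using Finset.strongInduction generalizing W with
  | H E ih =>
  rcases E.eq_empty_or_nonempty with rfl | hne
  · simp
  obtain ⟨v, hv⟩ : (E.biUnion id ∩ W).Nonempty := by simpa using h E subset_rfl hne
  obtain ⟨e, he, hve⟩ := mem_biUnion.mp (mem_inter.mp hv).1
  have hvW := (mem_inter.mp hv).2
  have hrest := ih (E.erase e) (erase_ssubset he) (fun f hf => hE f (mem_of_mem_erase hf))
    (W ∪ e) fun F hF hFne => by
      have heF : e ∉ F := fun h => notMem_erase e E (hF h)
      simpa [biUnion_sdiff_eq_union he heF, union_assoc] using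
        h F (hF.trans (erase_subset e E)) hFne
  have hWe : (W ∪ e).card ≤ W.card + (s - 1) := by
    have := card_union_add_card_inter W e
    have : 0 < (W ∩ e).card := card_pos.mpr ⟨v, mem_inter.mpr ⟨hvW, hve⟩⟩
    have := hE e he
    omega
  rw [biUnion_eq_union_biUnion_erase he, ← union_assoc, ← card_erase_add_one he]
  calc _ ≤ (W ∪ e).card + (E.erase e).card * (s - 1) := hrest
    _ ≤ W.card + ((E.erase e).card + 1) * (s - 1) := by rw [add_one_mul]; omega

theorem card_biUnion_le_of_forall_inter_nonempty {s : ℕ} {E : Finset (Finset α)}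
    (hE : ∀ e ∈ E, e.card ≤ s) (hne : E.Nonempty)
    (h : ∀ F ⊆ E, F.Nonempty → F ≠ E → (F.biUnion id ∩ (E \ F).biUnion id).Nonempty) :
    (E.biUnion id).card ≤ 1 + E.card * (s - 1) := by
  obtain ⟨e, he⟩ := hne
  have hrest := card_union_biUnion_le_of_forall_inter_nonempty
    (fun f hf => hE f (mem_of_mem_erase hf)) e fun F hF hFne => by
      have heF : e ∉ F := fun h => notMem_erase e E (hF h)
      simpa [biUnion_sdiff_eq_union he heF] using
        h F (hF.trans (erase_subset e E)) hFne (fun hFE => heF (hFE ▸ he))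
  rw [biUnion_eq_union_biUnion_erase he, ← card_erase_add_one he]
  have := hE e he
  calc _ ≤ e.card + (E.erase e).card * (s - 1) := hrest
    _ ≤ 1 + ((E.erase e).card + 1) * (s - 1) := by rw [add_one_mul]; omega

end Finset

namespace SUnifHypergraph

variable {s : ℕ}

def fromEdgeSet (F : Finset (Finset ℕ)) (hF : ∀ e ∈ F, e.card = s) : SUnifHypergraph s where
  V := F.biUnion id
  E := F
  card_edges := hF
  edges_sub := fun _ he => subset_biUnion_of_mem id he

theorem biUnion_subset_V (G : SUnifHypergraph s) {F : Finset (Finset ℕ)} (hF : F ⊆ G.E) :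
    F.biUnion id ⊆ G.V :=
  biUnion_subset.mpr fun e he => G.edges_sub e (hF he)

theorem biUnion_nonempty (G : SUnifHypergraph s) (hs : 0 < s) {F : Finset (Finset ℕ)}
    (hF : F ⊆ G.E) (hne : F.Nonempty) : (F.biUnion id).Nonempty := by
  obtain ⟨e, he⟩ := hne
  obtain ⟨x, hx⟩ := card_pos.mp ((G.card_edges e (hF he)).symm ▸ hs)
  exact ⟨x, mem_biUnion.mpr ⟨e, he, hx⟩⟩

namespace StrictlyBalanced

variable {G : SUnifHypergraph s}

theorem card_mul_lt (hG : G.StrictlyBalanced) {F : Finset (Finset ℕ)} (hF : F ⊆ G.E)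
    (hne : (F.biUnion id).Nonempty) (hproper : ¬(F.biUnion id = G.V ∧ F = G.E)) :
    F.card * G.V.card < G.E.card * (F.biUnion id).card := by
  have h := hG.2 (fromEdgeSet F fun e he => G.card_edges e (hF he)) (G.biUnion_subset_V hF) hF
    hne hproper
  have hFpos : (0 : ℚ) < (F.biUnion id).card := by exact_mod_cast card_pos.mpr hne
  have hVpos : (0 : ℚ) < G.V.card := by exact_mod_cast card_pos.mpr hG.1
  simp only [density, fromEdgeSet] at h
  rw [div_lt_div_iff₀ hFpos hVpos] at h
  exact_mod_cast h

theorem biUnion_E_eq_V (hG : G.StrictlyBalanced) (hs : 0 < s) (hE : G.E.Nonempty) :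
    G.E.biUnion id = G.V := by
  by_contra hne
  have h := hG.card_mul_lt subset_rfl (G.biUnion_nonempty hs subset_rfl hE) fun h => hne h.1
  exact (Nat.mul_le_mul_left _ (card_le_card (G.biUnion_subset_V subset_rfl))).not_gt h

theorem biUnion_inter_nonempty (hG : G.StrictlyBalanced) (hs : 0 < s) {F : Finset (Finset ℕ)}
    (hF : F ⊆ G.E) (hne : F.Nonempty) (hFE : F ≠ G.E) :
    (F.biUnion id ∩ (G.E \ F).biUnion id).Nonempty := by
  by_contra hdisj
  rw [not_nonempty_iff_eq_empty, ← disjoint_iff_inter_eq_empty] at hdisj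
  have hrest : (G.E \ F).Nonempty := sdiff_nonempty.mpr fun h => hFE (hF.antisymm h)
  have h₁ := hG.card_mul_lt hF (G.biUnion_nonempty hs hF hne) fun h => hFE h.2
  have h₂ := hG.card_mul_lt sdiff_subset (G.biUnion_nonempty hs sdiff_subset hrest) fun h => by
    obtain ⟨e, he⟩ := hne
    exact (mem_sdiff.mp (h.2.symm ▸ hF he)).2 he
  have hcard : F.card + (G.E \ F).card = G.E.card := by
    rw [add_comm]; exact card_sdiff_add_card_eq_card hF
  have hV : (F.biUnion id).card + ((G.E \ F).biUnion id).card ≤ G.V.card := by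
    rw [← card_union_of_disjoint hdisj]
    exact card_le_card (union_subset (G.biUnion_subset_V hF) (G.biUnion_subset_V sdiff_subset))
  have h := Nat.add_lt_add h₁ h₂
  rw [← add_mul, ← mul_add, hcard] at h
  exact (Nat.mul_le_mul_left _ hV).not_gt h

theorem card_V_le (hG : G.StrictlyBalanced) (hs : 0 < s) (hE : G.E.Nonempty) :
    G.V.card ≤ 1 + G.E.card * (s - 1) := by
  rw [← hG.biUnion_E_eq_V hs hE]
  exact card_biUnion_le_of_forall_inter_nonempty (fun e he => (G.card_edges e he).le) hE
    fun F hF hne hFE => hG.biUnion_inter_nonempty hs hF hne hFE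

end StrictlyBalanced

theorem strictlyBalanced_of_card_biUnion_eq (G : SUnifHypergraph s) {t : ℕ}
    (hV : G.E.biUnion id = G.V) (hE : G.E.Nonempty)
    (hcard : ∀ F ⊆ G.E, F.Nonempty → (F.biUnion id).card = 1 + F.card * t) :
    G.StrictlyBalanced := by
  have hGV : G.V.card = 1 + G.E.card * t := hV ▸ hcard G.E subset_rfl hE
  refine ⟨card_pos.mp (by omega), fun H hHV hHE hHne hproper => ?_⟩
  have hlow : 1 + H.E.card * t ≤ H.V.card := by
    rcases H.E.eq_empty_or_nonempty with h | h
    · simpa [h] using card_pos.mpr hHne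
    · rw [← hcard H.E hHE h]
      exact card_le_card (H.biUnion_subset_V subset_rfl)
  have hlt : H.E.card < G.E.card := by
    refine card_lt_card (ssubset_of_subset_of_ne hHE fun hEq => hproper ⟨hHV.antisymm ?_, hEq⟩)
    rw [← hV, ← hEq]
    exact H.biUnion_subset_V subset_rfl
  have hHpos : (0 : ℚ) < H.V.card := by exact_mod_cast card_pos.mpr hHne
  have hGpos : (0 : ℚ) < G.V.card := by exact_mod_cast (by omega : 0 < G.V.card)
  rw [density, density, div_lt_div_iff₀ hHpos hGpos]
  norm_cast
  calc H.E.card * G.V.card = H.E.card * (1 + G.E.card * t) := by rw [hGV]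
    _ < G.E.card * (1 + H.E.card * t) := by nlinarith
    _ ≤ G.E.card * H.V.card := Nat.mul_le_mul_left _ hlow

/-- The petal vertices `Nat.pair i j + 1`, `j < t`, of the `i`-th edge; vertex `0` is the centre. -/
def petal (t i : ℕ) : Finset ℕ :=
  (range t).image fun j => Nat.pair i j + 1

def starEdge (t i : ℕ) : Finset ℕ :=
  insert 0 (petal t i)

theorem zero_notMem_petal (t i : ℕ) : 0 ∉ petal t i := by
  simp [petal]

theorem card_petal (t i : ℕ) : (petal t i).card = t := by
  rw [petal, card_image_of_injective _ fun j j' h => by simpa [Nat.pair_eq_pair] using h,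
    card_range]

theorem disjoint_petal (t : ℕ) {i i' : ℕ} (h : i ≠ i') : Disjoint (petal t i) (petal t i') := by
  simp [petal, disjoint_left, Nat.pair_eq_pair, Ne.symm h]

theorem card_starEdge (t i : ℕ) : (starEdge t i).card = t + 1 := by
  rw [starEdge, card_insert_of_notMem (zero_notMem_petal t i), card_petal]

theorem starEdge_injective {t : ℕ} (ht : 0 < t) : Function.Injective (starEdge t) := by
  intro i i' h
  by_contra hne
  have hpetal : petal t i = petal t i' := by
    simpa [starEdge, zero_notMem_petal] using congrArg (·.erase 0) h
  have := disjoint_petal t hne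
  rw [hpetal, disjoint_self_iff_empty, ← card_eq_zero, card_petal] at this
  omega

theorem card_biUnion_starEdge (t : ℕ) {I : Finset ℕ} (hI : I.Nonempty) :
    (I.biUnion (starEdge t)).card = 1 + I.card * t := by
  have hcentre : I.biUnion (starEdge t) = insert 0 (I.biUnion (petal t)) := by
    ext x
    obtain ⟨i, hi⟩ := hI
    simp only [starEdge, mem_biUnion, mem_insert]
    constructor
    · rintro ⟨j, hj, rfl | hx⟩
      exacts [.inl rfl, .inr ⟨j, hj, hx⟩]
    · rintro (rfl | ⟨j, hj, hx⟩)
      exacts [⟨i, hi, .inl rfl⟩, ⟨j, hj, .inr hx⟩]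
  rw [hcentre, card_insert_of_notMem (by simp [zero_notMem_petal]),
    card_biUnion fun i _ i' _ h => disjoint_petal t h]
  simp [card_petal, add_comm]

def star (t k : ℕ) : SUnifHypergraph (t + 1) :=
  fromEdgeSet ((range k).image (starEdge t)) fun e he => by
    obtain ⟨i, -, rfl⟩ := mem_image.mp he
    exact card_starEdge t i

theorem card_biUnion_of_subset_star {t k : ℕ} (ht : 0 < t) {F : Finset (Finset ℕ)}
    (hF : F ⊆ (star t k).E) (hne : F.Nonempty) : (F.biUnion id).card = 1 + F.card * t := by
  obtain ⟨I, -, rfl⟩ := subset_image_iff.mp hF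
  rw [image_biUnion, card_image_of_injective _ (starEdge_injective ht)]
  exact card_biUnion_starEdge t (image_nonempty.mp hne)

theorem strictlyBalanced_star {t k : ℕ} (ht : 0 < t) (hk : 0 < k) : (star t k).StrictlyBalanced :=
  strictlyBalanced_of_card_biUnion_eq _ rfl (by simpa [star, fromEdgeSet] using hk.ne')
    fun _ hF hne => card_biUnion_of_subset_star ht hF hne

theorem density_star {t k : ℕ} (ht : 0 < t) (hk : 0 < k) :
    (star t k).density = k / (1 + k * t) := by
  have hE : (star t k).E.card = k := by
    simp [star, fromEdgeSet, card_image_of_injective _ (starEdge_injective ht)]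
  have hV : (star t k).V.card = 1 + k * t :=
    (card_biUnion_of_subset_star ht subset_rfl (card_pos.mp (by omega))).trans (by rw [hE])
  rw [density, hE, hV]
  push_cast
  rfl

end SUnifHypergraph

/-- For `s ≥ 2` and rational `0 < ρ < 1/(s-1)`, a strictly
balanced `s`-uniform hypergraph with density `ρ` exists iff
`ρ = k/(1 + k(s-1))` for some positive integer `k`. -/
theorem stmt2 (s : ℕ) (hs : 2 ≤ s) (ρ : ℚ) (h0 : 0 < ρ)
    (h1 : ρ < 1 / ((s : ℚ) - 1)) :
    (∃ G : SUnifHypergraph s, G.StrictlyBalanced ∧ G.density = ρ) ↔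
      ∃ k : ℕ, 0 < k ∧ ρ = (k : ℚ) / (1 + (k : ℚ) * ((s : ℚ) - 1)) := by
  have hs₁ : ((s - 1 : ℕ) : ℚ) = s - 1 := Nat.cast_pred (by omega)
  constructor
  · rintro ⟨G, hG, rfl⟩
    have hE : G.E.Nonempty := nonempty_iff_ne_empty.mpr fun h => by simp [density, h] at h0
    have hV : (0 : ℚ) < G.V.card := by exact_mod_cast card_pos.mpr hG.1
    have hlt : G.E.card * (s - 1) < G.V.card := by
      rw [density, div_lt_div_iff₀ hV (by rw [← hs₁]; exact_mod_cast (by omega : 0 < s - 1)),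
        one_mul, ← hs₁] at h1
      exact_mod_cast h1
    have hcard : G.V.card = 1 + G.E.card * (s - 1) := by
      have := hG.card_V_le (by omega) hE
      omega
    refine ⟨G.E.card, hE.card_pos, ?_⟩
    rw [density, hcard, ← hs₁]
    push_cast
    rfl
  · rintro ⟨k, hk, rfl⟩
    obtain ⟨t, rfl⟩ : ∃ t, s = t + 1 := ⟨s - 1, by omega⟩
    refine ⟨star t k, strictlyBalanced_star (by omega) hk, ?_⟩
    rw [density_star (by omega) hk]
    push_cast
    ring
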